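/- Assume hypotheses (EC) and (UC). Let r ∈ (0,r_T) and M ≥ M(0,r). Then M < M^{τ(M,r)}. -/

import Mathlib

open MeasureTheory Set Filter Topology

noncomputable section

variable {H : Type*} [NormedAddCommGroup H] [InnerProductSpace ℂ H] [CompleteSpace H]
  [SecondCountableTopology H]

/-- `U` is a strongly continuous one-parameter group of unitary operators on `H`,
abstracting the Schrödinger group `e^{-iΔt}`. -/
def IsUnitaryGroup (U : ℝ → H →L[ℂ] H) : Prop :=
  U 0 = ContinuousLinearMap.id ℂ H ∧
  (∀ s t : ℝ, U (s + t) = (U s).comp (U t)) ∧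
  (∀ (t : ℝ) (x : H), ‖U t x‖ = ‖x‖) ∧
  ∀ x : H, Continuous fun t : ℝ => U t x

/-- `B` is a nonzero orthogonal projection on `H`, abstracting multiplication by `χ_ω`. -/
def IsOrthProj (B : H →L[ℂ] H) : Prop :=
  B ≠ 0 ∧ B.comp B = B ∧ ∀ x y : H, (inner ℂ (B x) y : ℂ) = inner ℂ x (B y)

/-- Membership in `L∞((a,b);H)`. -/
def MemLinfty (u : ℝ → H) (a b : ℝ) : Prop :=
  AEStronglyMeasurable u (volume : Measure ℝ) ∧
    ∃ c : ℝ, ∀ᵐ t : ℝ ∂volume, t ∈ Ioo a b → ‖u t‖ ≤ c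

/-- Membership in `L∞((0,∞);H)`. -/
def MemLinftyInf (u : ℝ → H) : Prop :=
  AEStronglyMeasurable u (volume : Measure ℝ) ∧
    ∃ c : ℝ, ∀ᵐ t : ℝ ∂volume, t ∈ Ioi (0 : ℝ) → ‖u t‖ ≤ c

/-- The `L∞((a,b);H)` norm of `u`. -/
def supNorm (u : ℝ → H) (a b : ℝ) : ℝ :=
  sInf {c : ℝ | 0 ≤ c ∧ ∀ᵐ t : ℝ ∂volume, t ∈ Ioo a b → ‖u t‖ ≤ c}

/-- `stateT U B T τ u y₀ = y(T; χ_{(τ,T)}u, y₀)`, the mild solution at time `T` of the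
controlled Schrödinger equation with initial state `y₀`, the control acting on `(τ,T)`:
`y(T) = U(T)y₀ + ∫_τ^T U(T-s) B u(s) ds`.  The free state at time `t` starting from `y₀`
with control `u` active from time `0` is `stateT U B t 0 u y₀`. -/
def stateT (U : ℝ → H →L[ℂ] H) (B : H →L[ℂ] H) (T τ : ℝ) (u : ℝ → H) (y₀ : H) : H :=
  U T y₀ + ∫ s in Ioo τ T, U (T - s) (B (u s))

/-- Hypothesis (EC): `L∞`-exact controllability with cost. -/
def EC (U : ℝ → H →L[ℂ] H) (B : H →L[ℂ] H) : Prop :=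
  ∀ τ : ℝ, 0 < τ → ∃ C : ℝ, 0 < C ∧ ∀ y₀ z : H, ∃ u : ℝ → H,
    AEStronglyMeasurable u (volume : Measure ℝ) ∧
    (∀ᵐ t : ℝ ∂volume, t ∈ Ioo 0 τ → ‖u t‖ ≤ C * ‖z - U τ y₀‖) ∧
    stateT U B τ 0 u y₀ = z

/-- Hypothesis (UC): unique continuation. -/
def UC (U : ℝ → H →L[ℂ] H) (B : H →L[ℂ] H) : Prop :=
  ∀ η : H, η ≠ 0 → volume {t : ℝ | B (U t η) = 0} = 0

/-- The admissible set `U_M` of the minimal time problem `(TOCP)_M`. -/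
def UMset (U : ℝ → H →L[ℂ] H) (B : H →L[ℂ] H) (y₀ : H) (M : ℝ) : Set (ℝ → H) :=
  {u | MemLinftyInf u ∧ (∀ᵐ t : ℝ ∂volume, t ∈ Ioi (0 : ℝ) → ‖u t‖ ≤ M) ∧
    ∃ s : ℝ, 0 < s ∧ stateT U B s 0 u y₀ = 0}

/-- The minimal time `T_M` of `(TOCP)_M`. -/
def Tmin (U : ℝ → H →L[ℂ] H) (B : H →L[ℂ] H) (y₀ : H) (M : ℝ) : ℝ :=
  sInf {s : ℝ | 0 < s ∧ ∃ u ∈ UMset U B y₀ M, stateT U B s 0 u y₀ = 0}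

/-- The admissible set `V_T` of the minimal norm problem `(NOCP)_T`. -/
def VTset (U : ℝ → H →L[ℂ] H) (B : H →L[ℂ] H) (y₀ : H) (T : ℝ) : Set (ℝ → H) :=
  {v | MemLinfty v 0 T ∧ stateT U B T 0 v y₀ = 0}

/-- The minimal norm `M_T` of `(NOCP)_T`. -/
def Mmin (U : ℝ → H →L[ℂ] H) (B : H →L[ℂ] H) (y₀ : H) (T : ℝ) : ℝ :=
  sInf ((fun v : ℝ → H => supNorm v 0 T) '' VTset U B y₀ T)

/-- Hypothesis (BB): bang-bang property of the minimal time problems. -/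
def BB (U : ℝ → H →L[ℂ] H) (B : H →L[ℂ] H) : Prop :=
  ∀ y₀ : H, y₀ ≠ 0 → ∀ M : ℝ, 0 < M → ∀ u ∈ UMset U B y₀ M,
    stateT U B (Tmin U B y₀ M) 0 u y₀ = 0 →
    ∀ᵐ t : ℝ ∂volume, t ∈ Ioo 0 (Tmin U B y₀ M) → ‖u t‖ = M

/-- Hypothesis (ET): existence of optimal controls for the minimal time problems. -/
def ET (U : ℝ → H →L[ℂ] H) (B : H →L[ℂ] H) : Prop :=
  ∀ y₀ : H, y₀ ≠ 0 → ∀ M : ℝ, 0 < M →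
    ∃ u ∈ UMset U B y₀ M, stateT U B (Tmin U B y₀ M) 0 u y₀ = 0

/-- The admissible set `U_{M,τ}`. -/
def UadmSet (M τ T : ℝ) : Set (ℝ → H) :=
  {u | MemLinfty u 0 T ∧ ∀ᵐ t : ℝ ∂volume, t ∈ Ioo τ T → ‖u t‖ ≤ M}

/-- The optimal distance `r(M,τ)` of the optimal target problem `(OP)^{M,τ}`. -/
def rOP (U : ℝ → H →L[ℂ] H) (B : H →L[ℂ] H) (y₀ z_d : H) (T M τ : ℝ) : ℝ :=
  sInf ((fun u : ℝ → H => ‖stateT U B T τ u y₀ - z_d‖) '' UadmSet M τ T)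

/-- `u` is an optimal control to `(OP)^{M,τ}`. -/
def IsOptOP (U : ℝ → H →L[ℂ] H) (B : H →L[ℂ] H) (y₀ z_d : H) (T M τ : ℝ) (u : ℝ → H) :
    Prop :=
  u ∈ UadmSet M τ T ∧ ‖stateT U B T τ u y₀ - z_d‖ = rOP U B y₀ z_d T M τ

/-- `M^τ`, the minimal norm for exact steering to the target `z_d`. -/
def Mtau (U : ℝ → H →L[ℂ] H) (B : H →L[ℂ] H) (y₀ z_d : H) (T τ : ℝ) : ℝ :=
  sInf ((fun u : ℝ → H => supNorm u τ T) ''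
    {u : ℝ → H | MemLinfty u 0 T ∧ stateT U B T τ u y₀ = z_d})

/-- The admissible set `W_{τ,r}` of the optimal norm problem `(NP)^{τ,r}`. -/
def WadmSet (U : ℝ → H →L[ℂ] H) (B : H →L[ℂ] H) (y₀ z_d : H) (T τ r : ℝ) :
    Set (ℝ → H) :=
  {u | MemLinfty u 0 T ∧ ‖stateT U B T τ u y₀ - z_d‖ ≤ r}

/-- The optimal norm `M(τ,r)` of `(NP)^{τ,r}`. -/
def MNP (U : ℝ → H →L[ℂ] H) (B : H →L[ℂ] H) (y₀ z_d : H) (T τ r : ℝ) : ℝ :=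
  sInf ((fun u : ℝ → H => supNorm u τ T) '' WadmSet U B y₀ z_d T τ r)

/-- `u` is an optimal control to `(NP)^{τ,r}`. -/
def IsOptNP (U : ℝ → H →L[ℂ] H) (B : H →L[ℂ] H) (y₀ z_d : H) (T τ r : ℝ) (u : ℝ → H) :
    Prop :=
  u ∈ WadmSet U B y₀ z_d T τ r ∧ supNorm u τ T = MNP U B y₀ z_d T τ r

/-- The admissible set `V_{M,r}` of the second type optimal time problem `(TP)^{M,r}`. -/
def VadmSet (U : ℝ → H →L[ℂ] H) (B : H →L[ℂ] H) (y₀ z_d : H) (T M r : ℝ) :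
    Set (ℝ → H) :=
  {u | ∃ τ : ℝ, τ ∈ Ico (0 : ℝ) T ∧ u ∈ UadmSet M τ T ∧
    ‖stateT U B T τ u y₀ - z_d‖ ≤ r}

/-- `τ_{M,r}(u)`. -/
def tauOf (U : ℝ → H →L[ℂ] H) (B : H →L[ℂ] H) (y₀ z_d : H) (T r : ℝ) (u : ℝ → H) : ℝ :=
  sSup {τ : ℝ | τ ∈ Ico (0 : ℝ) T ∧ ‖stateT U B T τ u y₀ - z_d‖ ≤ r}

/-- The optimal time `τ(M,r)` of `(TP)^{M,r}`. -/
def tauTP (U : ℝ → H →L[ℂ] H) (B : H →L[ℂ] H) (y₀ z_d : H) (T M r : ℝ) : ℝ :=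
  sSup (tauOf U B y₀ z_d T r '' VadmSet U B y₀ z_d T M r)

/-- `u` is an optimal control to `(TP)^{M,r}`. -/
def IsOptTP (U : ℝ → H →L[ℂ] H) (B : H →L[ℂ] H) (y₀ z_d : H) (T M r : ℝ) (u : ℝ → H) :
    Prop :=
  u ∈ VadmSet U B y₀ z_d T M r ∧
    ‖stateT U B T (tauTP U B y₀ z_d T M r) u y₀ - z_d‖ ≤ r

/-- The adjoint state `φ*(t) = U(t-T)(z_d - y(T; χ_{(τ,T)}u, y₀))`. -/
def adjState (U : ℝ → H →L[ℂ] H) (B : H →L[ℂ] H) (y₀ z_d : H) (T τ : ℝ) (u : ℝ → H)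
    (t : ℝ) : H :=
  U (t - T) (z_d - stateT U B T τ u y₀)


/-!
Since `M ≥ M(0,r) ≥ (r_T - r) / T`, the bound `M` is positive. A control of norm at most `M`
moves the final state away from `U(T)y₀` by at most `M` per unit of time, so it needs time at least
`(r_T - r) / M` to reach `B(z_d, r)`; hence `τ(M,r) < T`. If `M^τ ≤ M` for `τ = τ(M,r)`, (EC)
provides a control steering exactly to `z_d` on `(τ,T)` with norm at most `M / θ` for a fixed
`θ < 1`. Its multiple by `θ` has norm at most `M` and ends at distance `(1 - θ) r_T < r` from
`z_d`, so it still reaches `B(z_d, r)` when switched on slightly after `τ`, contradicting the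
maximality of `τ(M,r)`.
-/
set_option linter.unusedSectionVars false

section

variable {U : ℝ → H →L[ℂ] H} {B : H →L[ℂ] H}

theorem IsOrthProj.norm_apply_le (hB : IsOrthProj B) (x : H) : ‖B x‖ ≤ ‖x‖ := by
  obtain ⟨-, hBB, hsa⟩ := hB
  have hidem : B (B x) = B x := congrArg (fun f : H →L[ℂ] H => f x) hBB
  have hsq : ‖B x‖ ^ 2 ≤ ‖x‖ * ‖B x‖ :=
    calc ‖B x‖ ^ 2 = RCLike.re (inner ℂ x (B x)) := by
          rw [← inner_self_eq_norm_sq (𝕜 := ℂ), hsa, hidem]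
      _ ≤ ‖(inner ℂ x (B x) : ℂ)‖ := RCLike.re_le_norm _
      _ ≤ ‖x‖ * ‖B x‖ := norm_inner_le_norm (𝕜 := ℂ) _ _
  nlinarith [norm_nonneg (B x), norm_nonneg x]

theorem IsUnitaryGroup.norm_apply (hU : IsUnitaryGroup U) (t : ℝ) (x : H) : ‖U t x‖ = ‖x‖ :=
  hU.2.2.1 t x

theorem IsUnitaryGroup.apply_apply (hU : IsUnitaryGroup U) (s t : ℝ) (x : H) :
    U s (U t x) = U (s + t) x := by
  rw [hU.2.1]; rfl

/-- Strong continuity upgrades to joint continuity because the `U t` are isometries. -/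
theorem IsUnitaryGroup.continuous_uncurry (hU : IsUnitaryGroup U) :
    Continuous fun p : ℝ × H => U p.1 p.2 := by
  rw [continuous_iff_continuousAt]
  rintro ⟨t₀, x₀⟩
  rw [ContinuousAt, tendsto_iff_norm_sub_tendsto_zero]
  have hle : ∀ p : ℝ × H, ‖U p.1 p.2 - U t₀ x₀‖ ≤ ‖p.2 - x₀‖ + ‖U p.1 x₀ - U t₀ x₀‖ := fun p =>
    calc ‖U p.1 p.2 - U t₀ x₀‖ ≤ ‖U p.1 p.2 - U p.1 x₀‖ + ‖U p.1 x₀ - U t₀ x₀‖ :=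
          norm_sub_le_norm_sub_add_norm_sub _ _ _
      _ = ‖p.2 - x₀‖ + ‖U p.1 x₀ - U t₀ x₀‖ := by rw [← map_sub, hU.norm_apply]
  have hcont : Continuous fun p : ℝ × H => ‖p.2 - x₀‖ + ‖U p.1 x₀ - U t₀ x₀‖ := by
    have := hU.2.2.2 x₀
    fun_prop
  exact squeeze_zero (fun _ => norm_nonneg _) hle (by simpa using hcont.tendsto (t₀, x₀))

end

theorem setIntegral_Ioo_comp_sub_right {E : Type*} [NormedAddCommGroup E] [NormedSpace ℝ E]
    (f : ℝ → E) (a b d : ℝ) :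
    ∫ s in Ioo a b, f (s - d) = ∫ s in Ioo (a - d) (b - d), f s := by
  rw [← (measurePreserving_sub_right volume d).setIntegral_preimage_emb
    (measurableEmbedding_subRight d) f, preimage_sub_const_Ioo, sub_add_cancel, sub_add_cancel]

theorem setIntegral_Ioo_add_Ioo {E : Type*} [NormedAddCommGroup E] [NormedSpace ℝ E]
    {f : ℝ → E} {a b c : ℝ} (hab : a ≤ b) (hbc : b ≤ c) (hf : IntegrableOn f (Ioo a c)) :
    (∫ s in Ioo a b, f s) + ∫ s in Ioo b c, f s = ∫ s in Ioo a c, f s := by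
  have hf' : IntervalIntegrable f volume a c :=
    (intervalIntegrable_iff_integrableOn_Ioo_of_le (hab.trans hbc)).2 hf
  simp only [← integral_Ioc_eq_integral_Ioo, ← intervalIntegral.integral_of_le hab,
    ← intervalIntegral.integral_of_le hbc, ← intervalIntegral.integral_of_le (hab.trans hbc)]
  exact intervalIntegral.integral_add_adjacent_intervals
    (hf'.mono_set (uIcc_subset_uIcc_left (by simp [hab, hbc, hab.trans hbc])))
    (hf'.mono_set (uIcc_subset_uIcc_right (by simp [hab, hbc, hab.trans hbc])))

section

variable {U : ℝ → H →L[ℂ] H} {B : H →L[ℂ] H} {u v : ℝ → H} {a b c τ T : ℝ} {y₀ z : H}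

theorem aestronglyMeasurable_duhamel (hU : IsUnitaryGroup U)
    (hv : AEStronglyMeasurable v volume) (T : ℝ) :
    AEStronglyMeasurable (fun s => U (T - s) (B (v s))) volume :=
  hU.continuous_uncurry.comp_aestronglyMeasurable
    ((continuous_const.sub continuous_id).aestronglyMeasurable.prodMk
      (B.continuous.comp_aestronglyMeasurable hv))

theorem norm_duhamel_le (hU : IsUnitaryGroup U) (hB : IsOrthProj B) (t : ℝ) (x : H) :
    ‖U t (B x)‖ ≤ ‖x‖ :=
  (hU.norm_apply t _).trans_le (hB.norm_apply_le x)

theorem integrableOn_duhamel (hU : IsUnitaryGroup U) (hB : IsOrthProj B)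
    (hv : AEStronglyMeasurable v volume) (hbd : ∀ᵐ t, t ∈ Ioo a b → ‖v t‖ ≤ c) :
    IntegrableOn (fun s => U (T - s) (B (v s))) (Ioo a b) := by
  refine Measure.integrableOn_of_bounded (M := c) (by simp)
    (aestronglyMeasurable_duhamel (B := B) hU hv T) ?_
  rw [ae_restrict_iff' measurableSet_Ioo]
  filter_upwards [hbd] with t ht hmem using (norm_duhamel_le hU hB _ _).trans (ht hmem)

theorem norm_integral_duhamel_le (hU : IsUnitaryGroup U) (hB : IsOrthProj B) (hab : a ≤ b)
    (hbd : ∀ᵐ t, t ∈ Ioo a b → ‖v t‖ ≤ c) :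
    ‖∫ s in Ioo a b, U (T - s) (B (v s))‖ ≤ c * (b - a) := by
  have hbd' : ∀ᵐ t, t ∈ Ioo a b → ‖U (T - t) (B (v t))‖ ≤ c := by
    filter_upwards [hbd] with t ht hmem using (norm_duhamel_le hU hB _ _).trans (ht hmem)
  simpa [Measure.real, hab] using norm_setIntegral_le_of_norm_le_const_ae' (by simp) hbd'

theorem stateT_congr (h : EqOn u v (Ioo τ T)) : stateT U B T τ u y₀ = stateT U B T τ v y₀ := by
  rw [stateT, stateT, setIntegral_congr_fun measurableSet_Ioo fun s hs => by rw [h hs]]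

theorem stateT_comp_sub (hU : IsUnitaryGroup U) :
    stateT U B T τ (fun t => v (t - τ)) y₀ = stateT U B (T - τ) 0 v (U τ y₀) := by
  have hshift := setIntegral_Ioo_comp_sub_right (fun σ => U (T - τ - σ) (B (v σ))) τ T τ
  simp only [sub_sub_sub_cancel_right, sub_self] at hshift
  rw [stateT, stateT, hshift, hU.apply_apply, sub_add_cancel]

theorem stateT_smul (w : ℂ) :
    stateT U B T τ (w • v) y₀ = w • stateT U B T τ v y₀ + (1 - w) • U T y₀ := by
  simp only [stateT, Pi.smul_apply, map_smul, integral_smul, smul_add, sub_smul, one_smul]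
  abel

theorem stateT_eq_stateT_sub_integral
    (hint : IntegrableOn (fun s => U (T - s) (B (v s))) (Ioo τ T)) (hτb : τ ≤ b) (hbT : b ≤ T) :
    stateT U B T b v y₀ = stateT U B T τ v y₀ - ∫ s in Ioo τ b, U (T - s) (B (v s)) := by
  rw [stateT, stateT, ← setIntegral_Ioo_add_Ioo hτb hbT hint]
  abel

theorem norm_sub_sub_le_norm_stateT_sub (hU : IsUnitaryGroup U) (hB : IsOrthProj B)
    (hτT : τ ≤ T) (hbd : ∀ᵐ t, t ∈ Ioo τ T → ‖u t‖ ≤ c) (z : H) :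
    ‖U T y₀ - z‖ - c * (T - τ) ≤ ‖stateT U B T τ u y₀ - z‖ := by
  have hdrift : ‖stateT U B T τ u y₀ - U T y₀‖ ≤ c * (T - τ) := by
    rw [stateT, add_sub_cancel_left]
    exact norm_integral_duhamel_le hU hB hτT hbd
  have := norm_sub_le_norm_sub_add_norm_sub (U T y₀) (stateT U B T τ u y₀) z
  rw [norm_sub_rev (U T y₀) (stateT U B T τ u y₀)] at this
  linarith

end

section

variable {u : ℝ → H} {a a' b K : ℝ}

theorem MemLinfty.const_smul (hu : MemLinfty u a b) (w : ℂ) : MemLinfty (w • u) a b := by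
  obtain ⟨hmeas, C, hC⟩ := hu
  refine ⟨hmeas.const_smul w, ‖w‖ * C, ?_⟩
  filter_upwards [hC] with t ht hmem
  rw [Pi.smul_apply, norm_smul]
  exact mul_le_mul_of_nonneg_left (ht hmem) (norm_nonneg w)

theorem MemLinfty.exists_ae_norm_le (hu : MemLinfty u a b) (ha : a ≤ a') :
    ∃ c, 0 ≤ c ∧ ∀ᵐ t, t ∈ Ioo a' b → ‖u t‖ ≤ c := by
  obtain ⟨-, C, hC⟩ := hu
  refine ⟨max C 0, le_max_right _ _, ?_⟩
  filter_upwards [hC] with t ht hmem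
  exact (ht ⟨ha.trans_lt hmem.1, hmem.2⟩).trans (le_max_left _ _)

theorem supNorm_nonneg : 0 ≤ supNorm u a b :=
  Real.sInf_nonneg fun _ hc => hc.1

theorem le_supNorm (hu : MemLinfty u a b) (ha : a ≤ a')
    (h : ∀ c, 0 ≤ c → (∀ᵐ t, t ∈ Ioo a' b → ‖u t‖ ≤ c) → K ≤ c) : K ≤ supNorm u a' b :=
  le_csInf (hu.exists_ae_norm_le ha) fun c hc => h c hc.1 hc.2

theorem ae_norm_le_of_supNorm_lt (hu : MemLinfty u a b) (ha : a ≤ a') (h : supNorm u a' b < K) :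
    ∀ᵐ t, t ∈ Ioo a' b → ‖u t‖ ≤ K := by
  obtain ⟨c, ⟨-, hc⟩, hcK⟩ := (csInf_lt_iff ⟨0, fun _ hc => hc.1⟩ (hu.exists_ae_norm_le ha)).1 h
  filter_upwards [hc] with t ht hmem using (ht hmem).trans hcK.le

end

section

variable {U : ℝ → H →L[ℂ] H} {B : H →L[ℂ] H} {u : ℝ → H} {y₀ z_d : H} {τ T M K r : ℝ}

theorem EC.exists_stateT_eq (hEC : EC U B) (hU : IsUnitaryGroup U) (hτT : τ < T) (y₀ z : H) :
    ∃ u, MemLinfty u 0 T ∧ stateT U B T τ u y₀ = z := by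
  obtain ⟨C, -, hC⟩ := hEC (T - τ) (sub_pos.2 hτT)
  obtain ⟨v, hvm, hvb, hvz⟩ := hC (U τ y₀) z
  have hshift := measurePreserving_sub_right volume τ
  refine ⟨(Ioi τ).indicator fun t => v (t - τ), ⟨?_, max (C * ‖z - U (T - τ) (U τ y₀)‖) 0, ?_⟩, ?_⟩
  · exact (hvm.comp_quasiMeasurePreserving hshift.quasiMeasurePreserving).indicator
      measurableSet_Ioi
  · filter_upwards [hshift.quasiMeasurePreserving.tendsto_ae.eventually hvb] with t ht ht0T
    by_cases htτ : t ∈ Ioi τ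
    · rw [indicator_of_mem htτ]
      exact (ht ⟨sub_pos.2 htτ, by linarith [ht0T.2]⟩).trans (le_max_left _ _)
    · simp [indicator_of_notMem htτ]
  · rw [stateT_congr fun t ht => indicator_of_mem (mem_Ioi.2 ht.1) _, stateT_comp_sub hU, hvz]

theorem sub_div_le_MNP (hU : IsUnitaryGroup U) (hB : IsOrthProj B) (hEC : EC U B)
    (hτ : 0 ≤ τ) (hτT : τ < T) (hr : 0 ≤ r) :
    (‖U T y₀ - z_d‖ - r) / (T - τ) ≤ MNP U B y₀ z_d T τ r := by
  obtain ⟨u₀, hu₀, hu₀z⟩ := hEC.exists_stateT_eq hU hτT y₀ z_d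
  refine le_csInf ⟨_, u₀, ⟨hu₀, by simpa [hu₀z] using hr⟩, rfl⟩ ?_
  rintro _ ⟨u, ⟨hu, hdist⟩, rfl⟩
  refine le_supNorm hu hτ fun c _ hc => ?_
  rw [div_le_iff₀ (sub_pos.2 hτT)]
  linarith [norm_sub_sub_le_norm_stateT_sub hU hB hτT.le hc z_d (y₀ := y₀)]

theorem exists_stateT_eq_of_Mtau_lt
    (hne : ∃ u, MemLinfty u 0 T ∧ stateT U B T τ u y₀ = z_d) (hτ : 0 ≤ τ)
    (h : Mtau U B y₀ z_d T τ < K) :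
    ∃ v, MemLinfty v 0 T ∧ stateT U B T τ v y₀ = z_d ∧ ∀ᵐ t, t ∈ Ioo τ T → ‖v t‖ ≤ K := by
  have hbdd : BddBelow ((fun u : ℝ → H => supNorm u τ T) ''
      {u | MemLinfty u 0 T ∧ stateT U B T τ u y₀ = z_d}) :=
    ⟨0, by rintro _ ⟨u, -, rfl⟩; exact supNorm_nonneg⟩
  obtain ⟨_, ⟨v, ⟨hv, hvz⟩, rfl⟩, hvK⟩ := (csInf_lt_iff hbdd (Nonempty.image _ hne)).1 h
  exact ⟨v, hv, hvz, ae_norm_le_of_supNorm_lt hv hτ hvK⟩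

theorem tauOf_nonneg : 0 ≤ tauOf U B y₀ z_d T r u :=
  Real.sSup_nonneg fun _ hτ => hτ.1.1

theorem tauOf_le (hT : 0 ≤ T) : tauOf U B y₀ z_d T r u ≤ T :=
  Real.sSup_le (fun _ hτ => hτ.1.2.le) hT

theorem le_tauOf (hτ : τ ∈ Ico 0 T) (hdist : ‖stateT U B T τ u y₀ - z_d‖ ≤ r) :
    τ ≤ tauOf U B y₀ z_d T r u :=
  le_csSup ⟨T, fun _ hτ' => hτ'.1.2.le⟩ ⟨hτ, hdist⟩

theorem tauTP_nonneg : 0 ≤ tauTP U B y₀ z_d T M r :=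
  Real.sSup_nonneg (by rintro _ ⟨u, -, rfl⟩; exact tauOf_nonneg)

theorem tauOf_le_tauTP (hT : 0 ≤ T) (hu : u ∈ VadmSet U B y₀ z_d T M r) :
    tauOf U B y₀ z_d T r u ≤ tauTP U B y₀ z_d T M r :=
  le_csSup ⟨T, by rintro _ ⟨v, -, rfl⟩; exact tauOf_le hT⟩ (mem_image_of_mem _ hu)

theorem tauOf_le_sub_div (hU : IsUnitaryGroup U) (hB : IsOrthProj B) (hM : 0 < M)
    (hu : u ∈ VadmSet U B y₀ z_d T M r) :
    tauOf U B y₀ z_d T r u ≤ T - (‖U T y₀ - z_d‖ - r) / M := by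
  obtain ⟨τ₀, hτ₀, ⟨-, hbd⟩, hdist₀⟩ := hu
  have hlate : ∀ τ, τ₀ ≤ τ → τ ≤ T → ‖stateT U B T τ u y₀ - z_d‖ ≤ r →
      τ ≤ T - (‖U T y₀ - z_d‖ - r) / M := by
    intro τ hτ₀τ hτT hdist
    have hbdτ : ∀ᵐ t, t ∈ Ioo τ T → ‖u t‖ ≤ M := by
      filter_upwards [hbd] with t ht hmem using ht ⟨hτ₀τ.trans_lt hmem.1, hmem.2⟩
    have := norm_sub_sub_le_norm_stateT_sub hU hB hτT hbdτ z_d (y₀ := y₀)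
    rw [le_sub_comm, div_le_iff₀ hM]
    linarith
  refine csSup_le ⟨τ₀, hτ₀, hdist₀⟩ fun τ ⟨⟨_, hτT⟩, hdist⟩ => ?_
  rcases le_total τ τ₀ with h | h
  · exact h.trans (hlate τ₀ le_rfl hτ₀.2.le hdist₀)
  · exact hlate τ h hτT.le hdist

theorem tauTP_lt (hU : IsUnitaryGroup U) (hB : IsOrthProj B) (hT : 0 < T) (hM : 0 < M)
    (hr : r < ‖U T y₀ - z_d‖) : tauTP U B y₀ z_d T M r < T := by
  rcases (VadmSet U B y₀ z_d T M r).eq_empty_or_nonempty with hV | hV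
  · simpa [tauTP, hV] using hT
  · refine (csSup_le (hV.image _) ?_).trans_lt (sub_lt_self T (div_pos (sub_pos.2 hr) hM))
    rintro _ ⟨u, hu, rfl⟩
    exact tauOf_le_sub_div hU hB hM hu

end

section

variable {U : ℝ → H →L[ℂ] H} {B : H →L[ℂ] H} {w : ℝ → H} {y₀ z_d : H} {τ T M r : ℝ}

/-- Switching the control on slightly later moves the final state only slightly. -/
theorem lt_tauOf_of_norm_stateT_sub_lt (hU : IsUnitaryGroup U) (hB : IsOrthProj B)
    (hτ : 0 ≤ τ) (hτT : τ < T) (hw : MemLinfty w 0 T)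
    (hwM : ∀ᵐ t, t ∈ Ioo τ T → ‖w t‖ ≤ M) (hdist : ‖stateT U B T τ w y₀ - z_d‖ < r) :
    w ∈ VadmSet U B y₀ z_d T M r ∧ τ < tauOf U B y₀ z_d T r w := by
  have hsmall : Tendsto (fun b => M * (b - τ)) (𝓝 τ) (𝓝 0) :=
    (by fun_prop : Continuous fun b : ℝ => M * (b - τ)).tendsto' τ 0 (by simp)
  obtain ⟨b, ⟨hbT, hb⟩, hτb⟩ := ((((gt_mem_nhds hτT).and
    (hsmall.eventually (gt_mem_nhds (sub_pos.2 hdist)))).filter_mono nhdsWithin_le_nhds).and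
    (self_mem_nhdsWithin (s := Ioi τ))).exists
  have hwMb : ∀ᵐ t, t ∈ Ioo b T → ‖w t‖ ≤ M := by
    filter_upwards [hwM] with t ht hmem using ht ⟨(mem_Ioi.1 hτb).trans hmem.1, hmem.2⟩
  have hwMτb : ∀ᵐ t, t ∈ Ioo τ b → ‖w t‖ ≤ M := by
    filter_upwards [hwM] with t ht hmem using ht ⟨hmem.1, hmem.2.trans hbT⟩
  have hdist_b : ‖stateT U B T b w y₀ - z_d‖ ≤ r := by
    rw [stateT_eq_stateT_sub_integral (integrableOn_duhamel hU hB hw.1 hwM) (le_of_lt hτb)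
      hbT.le, sub_right_comm]
    calc _ ≤ ‖stateT U B T τ w y₀ - z_d‖ + ‖∫ s in Ioo τ b, U (T - s) (B (w s))‖ :=
          norm_sub_le _ _
      _ ≤ ‖stateT U B T τ w y₀ - z_d‖ + M * (b - τ) := by
          gcongr; exact norm_integral_duhamel_le hU hB (le_of_lt hτb) hwMτb
      _ ≤ r := by linarith
  have hb : b ∈ Ico 0 T := ⟨hτ.trans (le_of_lt hτb), hbT⟩
  exact ⟨⟨b, hb, ⟨hw, hwMb⟩, hdist_b⟩, (mem_Ioi.1 hτb).trans_le (le_tauOf hb hdist_b)⟩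

/-- Scaling an exact control by `θ = 1 - r / (2 ‖U T y₀ - z_d‖)` trades a distance `r / 2`
from the target for a norm reduction by the factor `θ < 1`. -/
theorem exists_lt_tauOf_of_Mtau_le (hU : IsUnitaryGroup U) (hB : IsOrthProj B) (hEC : EC U B)
    (hτ : 0 ≤ τ) (hτT : τ < T) (hr : r ∈ Ioo 0 ‖U T y₀ - z_d‖) (hM : 0 < M)
    (hle : Mtau U B y₀ z_d T τ ≤ M) :
    ∃ w ∈ VadmSet U B y₀ z_d T M r, τ < tauOf U B y₀ z_d T r w := by
  obtain ⟨hr0, hrρ⟩ := hr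
  set ρ := ‖U T y₀ - z_d‖
  set θ : ℝ := 1 - r / (2 * ρ) with hθ
  have hρ : 0 < ρ := hr0.trans hrρ
  have hθ1 : θ < 1 := sub_lt_self _ (by positivity)
  have hθ0 : 0 < θ := by
    rw [hθ, sub_pos, div_lt_one (by positivity)]
    linarith
  obtain ⟨v, hv, hvz, hvθ⟩ := exists_stateT_eq_of_Mtau_lt (hEC.exists_stateT_eq hU hτT y₀ z_d)
    hτ (hle.trans_lt ((lt_div_iff₀ hθ0).2 (mul_lt_of_lt_one_right hM hθ1)))
  have hnorm : ∀ {s : ℝ}, 0 ≤ s → ∀ x : H, ‖(s : ℂ) • x‖ = s * ‖x‖ := fun hs x => by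
    rw [norm_smul, Complex.norm_of_nonneg hs]
  refine ⟨_, lt_tauOf_of_norm_stateT_sub_lt hU hB hτ hτT (hv.const_smul (θ : ℂ)) ?_ ?_⟩
  · filter_upwards [hvθ] with t ht hmem
    rw [Pi.smul_apply, hnorm hθ0.le]
    exact (le_div_iff₀' hθ0).1 (ht hmem)
  · have hfinal : stateT U B T τ ((θ : ℂ) • v) y₀ - z_d = (1 - (θ : ℂ)) • (U T y₀ - z_d) := by
      rw [stateT_smul, hvz]
      module
    have hgap : (1 - θ) * ρ = r / 2 := by
      rw [hθ]
      field_simp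
      ring
    rw [hfinal, ← Complex.ofReal_one, ← Complex.ofReal_sub, hnorm (sub_nonneg.2 hθ1.le), hgap]
    linarith

end

theorem lt_Mtau_of_tauTP_general
    (U : ℝ → H →L[ℂ] H) (B : H →L[ℂ] H) (hU : IsUnitaryGroup U) (hB : IsOrthProj B)
    (hEC : EC U B)
    (T : ℝ) (hT : 0 < T) (y₀ z_d : H)
    (M r : ℝ) (hr : r ∈ Ioo (0 : ℝ) ‖U T y₀ - z_d‖) (hM : MNP U B y₀ z_d T 0 r ≤ M) :
    M < Mtau U B y₀ z_d T (tauTP U B y₀ z_d T M r) := by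
  have hMNP := sub_div_le_MNP hU hB hEC le_rfl hT hr.1.le (y₀ := y₀) (z_d := z_d)
  have hM0 : 0 < M := (div_pos (sub_pos.2 hr.2) (by simpa using hT)).trans_le (hMNP.trans hM)
  by_contra! hle
  obtain ⟨w, hw, hlt⟩ := exists_lt_tauOf_of_Mtau_le hU hB hEC tauTP_nonneg
    (tauTP_lt hU hB hT hM0 hr.2) hr hM0 hle
  exact hlt.not_ge (tauOf_le_tauTP hT.le hw)

theorem lt_Mtau_of_tauTP
    (U : ℝ → H →L[ℂ] H) (B : H →L[ℂ] H) (hU : IsUnitaryGroup U) (hB : IsOrthProj B)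
    (hEC : EC U B) (hECrev : EC (fun t => U (-t)) B)
    (hUC : UC U B)
    (T : ℝ) (hT : 0 < T) (y₀ z_d : H) (hrT : 0 < ‖U T y₀ - z_d‖)
    (M r : ℝ) (hr : r ∈ Ioo (0 : ℝ) ‖U T y₀ - z_d‖) (hM : MNP U B y₀ z_d T 0 r ≤ M) :
    M < Mtau U B y₀ z_d T (tauTP U B y₀ z_d T M r) :=
  lt_Mtau_of_tauTP_general U B hU hB hEC T hT y₀ z_d M r hr hM
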